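/- Let Ω = {(x,y,z) : x,y ∈ (0,l), z ∈ (−h,h)} ⊂ ℝ³ and, for ε > 0 small and a fixed angle ρ₀, let n_ε(x,y,z) = (cos ρ_ε(z), 0, sin ρ_ε(z)), where ρ_ε(z) = ρ₀ + ε − ε^{−3}(z − h + ε²)² for z ∈ [h − ε², h], ρ_ε(z) = ρ₀ + ε for z ∈ (−h + ε², h − ε²), and ρ_ε(z) = ρ₀ + ε − ε^{−3}(z + h − ε²)² for z ∈ [−h, −h + ε²]. Then n_ε ∈ W^{1,2}(Ω;S²) ∩ W^{2,1}(Ω;S²) and E[n_ε] = 4l²(K/3 − K₁₃ sin(2ρ₀)/(2ε)). In particular, if K₁₃ sin(2ρ₀) > 0 then E[n_ε] → −∞ as ε → 0, so E is unbounded from below on W^{1,2}(Ω;S²) ∩ W^{2,1}(Ω;S²). -/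

import Mathlib

/-!
Statement 3 (unboundedness of the energy, Section 2.1): on the box
`Ω = (0,l)² × (−h,h)`, the maps `n_ε(x,y,z) = (cos ρ_ε(z), 0, sin ρ_ε(z))` belong to
`W^{1,2} ∩ W^{2,1}`, satisfy `E[n_ε] = 4l²(K/3 − K₁₃ sin(2ρ₀)/(2ε))`, and if
`K₁₃ sin(2ρ₀) > 0` then `E[n_ε] → −∞`, so `E` is unbounded from below.
-/

open MeasureTheory Metric Set Filter
open scoped RealInnerProductSpace ENNReal Topology Classical

noncomputable section

abbrev E3 := EuclideanSpace ℝ (Fin 3)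

def mk3 (a b c : ℝ) : E3 := (WithLp.equiv 2 (Fin 3 → ℝ)).symm ![a, b, c]

/-- The box `Ω = (0,l) × (0,l) × (−h,h)`. -/
def box (l h : ℝ) : Set E3 :=
  {p | p 0 ∈ Ioo 0 l ∧ p 1 ∈ Ioo 0 l ∧ p 2 ∈ Ioo (-h) h}

/-- The profile angle `ρ_ε`. -/
def ρfun (ρ0 h ε z : ℝ) : ℝ :=
  if h - ε ^ 2 ≤ z then ρ0 + ε - (z - h + ε ^ 2) ^ 2 / ε ^ 3
  else if z ≤ -h + ε ^ 2 then ρ0 + ε - (z + h - ε ^ 2) ^ 2 / ε ^ 3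
  else ρ0 + ε

/-- The comparison maps `n_ε(x,y,z) = (cos ρ_ε(z), 0, sin ρ_ε(z))`. -/
def nfun (ρ0 h ε : ℝ) (p : E3) : E3 :=
  mk3 (Real.cos (ρfun ρ0 h ε (p 2))) 0 (Real.sin (ρfun ρ0 h ε (p 2)))

/-- Membership in `𝒜 = W^{1,2}(Ω; S²) ∩ W^{2,1}(Ω; S²)` (pointwise a.e. derivatives). -/
def MemA (Ω : Set E3) (n : E3 → E3) : Prop :=
  (∀ᵐ x ∂(volume.restrict Ω), ‖n x‖ = 1) ∧
  (∀ᵐ x ∂(μH[(2 : ℝ)].restrict (frontier Ω)), ‖n x‖ = 1) ∧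
  (∀ᵐ x ∂(volume.restrict Ω), DifferentiableAt ℝ n x) ∧
  (∀ᵐ x ∂(volume.restrict Ω), DifferentiableAt ℝ (fderiv ℝ n) x) ∧
  IntegrableOn n Ω volume ∧
  IntegrableOn (fun x => ‖fderiv ℝ n x‖ ^ 2) Ω volume ∧
  IntegrableOn (fun x => ‖fderiv ℝ (fderiv ℝ n) x‖) Ω volume

/-- The surface integrand `((n·∇)n)·v = ⟪(Dn)(n), v⟫` at the point `x`. -/
def surfTerm (n : E3 → E3) (x v : E3) : ℝ := ⟪fderiv ℝ n x (n x), v⟫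

/-- The energy `E[n] = ∫_Ω (K/2)|∇n|² dx + K₁₃ ∫_{∂Ω} ((n·∇)n)·ν dσ` for the box
`Ω = (0,l)² × (−h,h)`: the surface integral is written as the sum of the integrals over
the six (open) faces, each with its exterior unit normal. -/
def energyEbox (K K13 l h : ℝ) (n : E3 → E3) : ℝ :=
  (∫ x in box l h, (K / 2) * ‖fderiv ℝ n x‖ ^ 2) +
    K13 *
      ((∫ q in (Ioo (0:ℝ) l ×ˢ Ioo (0:ℝ) l), surfTerm n (mk3 q.1 q.2 h) (mk3 0 0 1)) +
       (∫ q in (Ioo (0:ℝ) l ×ˢ Ioo (0:ℝ) l), surfTerm n (mk3 q.1 q.2 (-h)) (mk3 0 0 (-1))) +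
       (∫ q in (Ioo (0:ℝ) l ×ˢ Ioo (-h) h), surfTerm n (mk3 l q.1 q.2) (mk3 1 0 0)) +
       (∫ q in (Ioo (0:ℝ) l ×ˢ Ioo (-h) h), surfTerm n (mk3 0 q.1 q.2) (mk3 (-1) 0 0)) +
       (∫ q in (Ioo (0:ℝ) l ×ˢ Ioo (-h) h), surfTerm n (mk3 q.1 l q.2) (mk3 0 1 0)) +
       (∫ q in (Ioo (0:ℝ) l ×ˢ Ioo (-h) h), surfTerm n (mk3 q.1 0 q.2) (mk3 0 (-1) 0)))


/-! ### Auxiliary lemmas -/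

lemma mk3_apply (a b c : ℝ) : mk3 a b c 0 = a ∧ mk3 a b c 1 = b ∧ mk3 a b c 2 = c := by
  refine ⟨?_, ?_, ?_⟩ <;> simp [mk3]

lemma mk3_two (a b c : ℝ) : (mk3 a b c) 2 = c := (mk3_apply a b c).2.2

lemma norm_mk3 (a b c : ℝ) : ‖mk3 a b c‖ = Real.sqrt (a^2 + b^2 + c^2) := by
  rw [EuclideanSpace.norm_eq]
  simp [mk3, Fin.sum_univ_three, sq_abs]

lemma inner_mk3 (a b c d e f : ℝ) : ⟪mk3 a b c, mk3 d e f⟫ = a*d + b*e + c*f := by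
  simp [mk3, PiLp.inner_apply, Fin.sum_univ_three]
  ring

lemma hasDerivAt_nv (θ : ℝ) :
    HasDerivAt (fun t => mk3 (Real.cos t) 0 (Real.sin t)) (mk3 (-Real.sin θ) 0 (Real.cos θ)) θ := by
  have : HasDerivAt (fun t => (![Real.cos t, 0, Real.sin t] : Fin 3 → ℝ))
      ![-Real.sin θ, 0, Real.cos θ] θ := by
    rw [hasDerivAt_pi]
    intro i
    fin_cases i
    · simpa using Real.hasDerivAt_cos θ
    · simpa using hasDerivAt_const θ (0:ℝ)
    · simpa using Real.hasDerivAt_sin θ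
  exact ((PiLp.continuousLinearEquiv 2 ℝ (fun _ : Fin 3 => ℝ)).symm :
      (Fin 3 → ℝ) →L[ℝ] E3).hasFDerivAt.comp_hasDerivAt θ this

def pr2 : E3 →L[ℝ] ℝ := EuclideanSpace.proj (2 : Fin 3)

lemma pr2_apply (x : E3) : pr2 x = x 2 := rfl

lemma norm_pr2 : ‖pr2‖ = 1 := by
  have h : pr2 = innerSL ℝ (EuclideanSpace.single (2 : Fin 3) (1:ℝ)) := by
    ext x
    simp [pr2, EuclideanSpace.inner_single_left]
  rw [h, innerSL_apply_norm, EuclideanSpace.norm_single]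
  norm_num

lemma hasDerivAt_sq_max (u : ℝ) :
    HasDerivAt (fun u : ℝ => max u 0 ^ 2) (2 * max u 0) u := by
  rcases lt_trichotomy u 0 with h | h | h
  · have he : (fun u : ℝ => max u 0 ^ 2) =ᶠ[nhds u] fun _ => (0:ℝ) := by
      filter_upwards [Iio_mem_nhds h] with v hv
      have : v < 0 := hv
      simp [max_eq_right this.le]
    rw [max_eq_right h.le]
    simpa using (hasDerivAt_const u (0:ℝ)).congr_of_eventuallyEq he
  · subst h
    rw [hasDerivAt_iff_tendsto_slope]
    simp only [max_self, mul_zero]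
    apply squeeze_zero_norm' (a := fun v : ℝ => |v|)
    · filter_upwards [self_mem_nhdsWithin] with v hv
      have h1 : |max v 0 ^ 2| ≤ v ^ 2 := by
        rw [abs_of_nonneg (by positivity)]
        rcases le_or_gt v 0 with h' | h'
        · simpa [max_eq_right h'] using sq_nonneg v
        · simp [max_eq_left h'.le]
      rw [slope_def_field]
      simp only [sub_zero, max_self, ne_eq]
      rw [zero_pow (two_ne_zero), sub_zero, div_eq_mul_inv]
      calc ‖max v 0 ^ 2 * v⁻¹‖ = |max v 0 ^2| * |v|⁻¹ := by
            rw [norm_mul, Real.norm_eq_abs, Real.norm_eq_abs, abs_inv]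
        _ ≤ v^2 * |v|⁻¹ := by gcongr
        _ = |v| := by
            rw [← sq_abs]
            have : |v| ≠ 0 := by simpa using hv
            field_simp
    · have : Tendsto (fun v : ℝ => |v|) (nhds 0) (nhds |(0:ℝ)|) := continuous_abs.tendsto 0
      simpa using this.mono_left nhdsWithin_le_nhds
  · have he : (fun u : ℝ => max u 0 ^ 2) =ᶠ[nhds u] fun v => v ^ 2 := by
      filter_upwards [Ioi_mem_nhds h] with v hv
      have : (0:ℝ) < v := hv
      simp [max_eq_left this.le]
    rw [max_eq_left h.le]
    simpa [mul_comm] using ((hasDerivAt_pow 2 u).congr_of_eventuallyEq he)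

lemma hasDerivAt_sq_min (u : ℝ) :
    HasDerivAt (fun u : ℝ => min u 0 ^ 2) (2 * min u 0) u := by
  have h := (hasDerivAt_sq_max (-u)).comp u (hasDerivAt_neg u)
  have hkey : ∀ v : ℝ, min v 0 = -(max (-v) 0) := by
    intro v
    simp [← min_neg_neg]
  have he : (fun v : ℝ => min v 0 ^ 2) = (fun v : ℝ => max v 0 ^ 2) ∘ (fun v => -v) := by
    funext v
    simp only [Function.comp_apply, hkey v, neg_pow_two]
  rw [he]
  refine HasDerivAt.congr_deriv h ?_
  rw [hkey u]
  ring

/-- The derivative of the profile `ρ_ε`. -/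
def ρD (h ε z : ℝ) : ℝ := (-2/ε^3) * (max (z-h+ε^2) 0 + min (z+h-ε^2) 0)

lemma continuous_ρD (h ε : ℝ) : Continuous (ρD h ε) := by
  apply Continuous.mul continuous_const
  exact ((continuous_id.sub continuous_const).add continuous_const).max continuous_const |>.add
    (((continuous_id.add continuous_const).sub continuous_const).min continuous_const)

lemma hasDerivAt_ρfun {h ε : ℝ} (ρ0 : ℝ) (hε : 0 < ε) (hεh : ε^2 < h) (z : ℝ) :
    HasDerivAt (ρfun ρ0 h ε) (ρD h ε z) z := by
  have hne : ε ^ 3 ≠ 0 := by positivity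
  rcases lt_or_ge (-h + ε^2) z with hz | hz
  · have he : ρfun ρ0 h ε =ᶠ[nhds z] fun w => ρ0 + ε - (max (w - h + ε^2) 0)^2 / ε^3 := by
      filter_upwards [Ioi_mem_nhds hz] with w hw
      have hw' : -h + ε^2 < w := hw
      unfold ρfun
      rcases le_or_gt (h - ε^2) w with h1 | h1
      · rw [if_pos h1, max_eq_left (by linarith)]
      · rw [if_neg (not_le.mpr h1), if_neg (by linarith), max_eq_right (by linarith)]
        simp
    have hd : HasDerivAt (fun w => ρ0 + ε - (max (w - h + ε^2) 0)^2 / ε^3)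
        (-(2 * max (z - h + ε^2) 0 * 1 / ε^3)) z := by
      have h1 : HasDerivAt (fun w : ℝ => (max (w - h + ε^2) 0)^2)
          (2 * max (z - h + ε^2) 0 * 1) z := by
        have h2 := (hasDerivAt_sq_max (z - h + ε^2)).comp z
          (((hasDerivAt_id z).sub_const h).add_const (ε^2))
        simpa [Function.comp_def] using h2
      exact (h1.div_const (ε^3)).const_sub (ρ0 + ε)
    have := hd.congr_of_eventuallyEq he
    refine this.congr_deriv (Eq.symm ?_)
    have hmin : min (z + h - ε^2) 0 = 0 := min_eq_right (by linarith)
    rw [ρD, hmin]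
    field_simp
    ring
  · have hz' : z < h - ε^2 := by linarith
    have he : ρfun ρ0 h ε =ᶠ[nhds z] fun w => ρ0 + ε - (min (w + h - ε^2) 0)^2 / ε^3 := by
      filter_upwards [Iio_mem_nhds hz'] with w hw
      have hw' : w < h - ε^2 := hw
      unfold ρfun
      rw [if_neg (not_le.mpr hw')]
      rcases le_or_gt w (-h + ε^2) with h1 | h1
      · rw [if_pos h1, min_eq_left (by linarith)]
      · rw [if_neg (not_le.mpr h1), min_eq_right (by linarith)]
        simp
    have hd : HasDerivAt (fun w => ρ0 + ε - (min (w + h - ε^2) 0)^2 / ε^3)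
        (-(2 * min (z + h - ε^2) 0 * 1 / ε^3)) z := by
      have h1 : HasDerivAt (fun w : ℝ => (min (w + h - ε^2) 0)^2)
          (2 * min (z + h - ε^2) 0 * 1) z := by
        have h2 := (hasDerivAt_sq_min (z + h - ε^2)).comp z
          (((hasDerivAt_id z).add_const h).sub_const (ε^2))
        simpa [Function.comp_def] using h2
      exact (h1.div_const (ε^3)).const_sub (ρ0 + ε)
    have := hd.congr_of_eventuallyEq he
    refine this.congr_deriv (Eq.symm ?_)
    have hmax : max (z - h + ε^2) 0 = 0 := max_eq_right (by linarith)
    rw [ρD, hmax]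
    field_simp
    ring

/-- The unit tangent direction. -/
def Fv (θ : ℝ) : E3 := mk3 (-Real.sin θ) 0 (Real.cos θ)

lemma norm_Fv (θ : ℝ) : ‖Fv θ‖ = 1 := by
  rw [Fv, norm_mk3]
  have : (-Real.sin θ)^2 + 0^2 + Real.cos θ^2 = 1 := by
    have := Real.sin_sq_add_cos_sq θ
    ring_nf
    ring_nf at this
    linarith
  rw [this, Real.sqrt_one]

lemma hasDerivAt_Fv (θ : ℝ) :
    HasDerivAt Fv (mk3 (-Real.cos θ) 0 (-Real.sin θ)) θ := by
  have h0 : HasDerivAt (fun t => (![-Real.sin t, 0, Real.cos t] : Fin 3 → ℝ))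
      ![-Real.cos θ, 0, -Real.sin θ] θ := by
    rw [hasDerivAt_pi]
    intro i
    fin_cases i
    · simpa using (Real.hasDerivAt_sin θ).fun_neg
    · simpa using hasDerivAt_const θ (0:ℝ)
    · simpa using Real.hasDerivAt_cos θ
  exact ((PiLp.continuousLinearEquiv 2 ℝ (fun _ : Fin 3 => ℝ)).symm :
      (Fin 3 → ℝ) →L[ℝ] E3).hasFDerivAt.comp_hasDerivAt θ h0

lemma hasFDerivAt_nfun {h ε : ℝ} (ρ0 : ℝ) (hε : 0 < ε) (hεh : ε^2 < h) (x : E3) :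
    HasFDerivAt (nfun ρ0 h ε)
      (pr2.smulRight (ρD h ε (x 2) • Fv (ρfun ρ0 h ε (x 2)))) x := by
  have h1 : HasDerivAt (fun z => mk3 (Real.cos (ρfun ρ0 h ε z)) 0 (Real.sin (ρfun ρ0 h ε z)))
      (ρD h ε (x 2) • Fv (ρfun ρ0 h ε (x 2))) (x 2) := by
    have := (hasDerivAt_nv (ρfun ρ0 h ε (x 2))).scomp (x 2)
      (hasDerivAt_ρfun ρ0 hε hεh (x 2))
    simpa [Function.comp_def, Fv] using this
  have h2 := (h1.hasFDerivAt).comp x pr2.hasFDerivAt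
  have h3 : ((1 : ℝ →L[ℝ] ℝ).smulRight (ρD h ε (x 2) • Fv (ρfun ρ0 h ε (x 2)))).comp pr2
      = pr2.smulRight (ρD h ε (x 2) • Fv (ρfun ρ0 h ε (x 2))) := by
    ext w
    simp
  rw [← ContinuousLinearMap.smulRight_one_eq_toSpanSingleton, h3] at h2
  exact h2

/-- `x ↦ ρ_ε'(x₃) • Fv(ρ_ε(x₃))`, so that `Dn_ε x = pr2.smulRight (Wmap x)`. -/
def Wmap (ρ0 h ε : ℝ) (y : E3) : E3 := ρD h ε (y 2) • Fv (ρfun ρ0 h ε (y 2))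

lemma fderiv_nfun {h ε : ℝ} (ρ0 : ℝ) (hε : 0 < ε) (hεh : ε^2 < h) (x : E3) :
    fderiv ℝ (nfun ρ0 h ε) x = pr2.smulRight (Wmap ρ0 h ε x) :=
  (hasFDerivAt_nfun ρ0 hε hεh x).fderiv

lemma fderiv_nfun_eq {h ε : ℝ} (ρ0 : ℝ) (hε : 0 < ε) (hεh : ε^2 < h) :
    fderiv ℝ (nfun ρ0 h ε)
      = (ContinuousLinearMap.smulRightL ℝ E3 E3 pr2) ∘ (Wmap ρ0 h ε) := by
  funext x
  rw [fderiv_nfun ρ0 hε hεh x]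
  rfl

lemma norm_fderiv_nfun {h ε : ℝ} (ρ0 : ℝ) (hε : 0 < ε) (hεh : ε^2 < h) (x : E3) :
    ‖fderiv ℝ (nfun ρ0 h ε) x‖ = |ρD h ε (x 2)| := by
  rw [fderiv_nfun ρ0 hε hεh x, ContinuousLinearMap.norm_smulRight_apply, norm_pr2, one_mul,
    Wmap, norm_smul, norm_Fv, mul_one, Real.norm_eq_abs]

lemma abs_ρD_le {h ε : ℝ} (hε : 0 < ε) {z : ℝ} (hz : z ∈ Icc (-h) h) :
    |ρD h ε z| ≤ 2/ε := by
  have h1 : |max (z-h+ε^2) 0 + min (z+h-ε^2) 0| ≤ ε^2 := by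
    rw [abs_le]
    constructor
    · have : -(ε^2) ≤ min (z+h-ε^2) 0 := le_min (by linarith [hz.1]) (neg_nonpos.mpr (by positivity))
      have h2 : (0:ℝ) ≤ max (z-h+ε^2) 0 := le_max_right _ _
      linarith
    · have : max (z-h+ε^2) 0 ≤ ε^2 := max_le (by linarith [hz.2]) (by positivity)
      have h2 : min (z+h-ε^2) 0 ≤ 0 := min_le_right _ _
      linarith
  rw [ρD, abs_mul]
  calc |(-2/ε^3)| * |max (z-h+ε^2) 0 + min (z+h-ε^2) 0| ≤ (2/ε^3) * ε^2 := by
        apply mul_le_mul _ h1 (abs_nonneg _) (by positivity)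
        rw [abs_div, abs_neg]
        simp [abs_of_nonneg (by positivity : (0:ℝ) ≤ ε^3)]
    _ = 2/ε := by field_simp

lemma hasDerivAt_ρD {h ε : ℝ} (hε : 0 < ε) (hεh : ε^2 < h) {z : ℝ}
    (hz1 : z ≠ h - ε^2) (hz2 : z ≠ -h + ε^2) :
    ∃ c : ℝ, |c| ≤ 2/ε^3 ∧ HasDerivAt (ρD h ε) c z := by
  have h23 : (0:ℝ) ≤ 2/ε^3 := by positivity
  rcases lt_trichotomy z (h - ε^2) with hlt | heq | hgt
  · rcases lt_trichotomy z (-h + ε^2) with hlt2 | heq2 | hgt2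
    · refine ⟨-2/ε^3, by rw [abs_div, abs_neg]; simp [abs_of_nonneg (le_of_lt hε),
        abs_of_nonneg (by positivity : (0:ℝ) ≤ ε^3)], ?_⟩
      have he : ρD h ε =ᶠ[nhds z] fun w => (-2/ε^3) * (w + h - ε^2) := by
        filter_upwards [Iio_mem_nhds hlt2] with w hw
        have hw' : w < -h + ε^2 := hw
        rw [ρD, max_eq_right (by linarith), min_eq_left (by linarith), zero_add]
      have hd : HasDerivAt (fun w => (-2/ε^3) * (w + h - ε^2)) (-2/ε^3) z := by
        have := (((hasDerivAt_id z).add_const h).sub_const (ε^2)).const_mul (-2/ε^3)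
        simpa using this
      exact hd.congr_of_eventuallyEq he
    · exact absurd heq2 hz2
    · refine ⟨0, by simpa using h23, ?_⟩
      have he : ρD h ε =ᶠ[nhds z] fun _ => (0:ℝ) := by
        filter_upwards [Ioo_mem_nhds hgt2 hlt] with w hw
        rw [ρD, max_eq_right (by linarith [hw.2]), min_eq_right (by linarith [hw.1])]
        simp
      exact (hasDerivAt_const z (0:ℝ)).congr_of_eventuallyEq he
  · exact absurd heq hz1
  · refine ⟨-2/ε^3, by rw [abs_div, abs_neg]; simp [abs_of_nonneg (by positivity : (0:ℝ) ≤ ε^3)], ?_⟩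
    have he : ρD h ε =ᶠ[nhds z] fun w => (-2/ε^3) * (w - h + ε^2) := by
      filter_upwards [Ioi_mem_nhds hgt] with w hw
      have hw' : h - ε^2 < w := hw
      rw [ρD, max_eq_left (by linarith), min_eq_right (by linarith), add_zero]
    have hd : HasDerivAt (fun w => (-2/ε^3) * (w - h + ε^2)) (-2/ε^3) z := by
      have := (((hasDerivAt_id z).sub_const h).add_const (ε^2)).const_mul (-2/ε^3)
      simpa using this
    exact hd.congr_of_eventuallyEq he

lemma second_deriv {h ε : ℝ} (ρ0 : ℝ) (hε : 0 < ε) (hεh : ε^2 < h) {x : E3}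
    (hx1 : x 2 ≠ h - ε^2) (hx2 : x 2 ≠ -h + ε^2) (hx3 : x 2 ∈ Icc (-h) h) :
    DifferentiableAt ℝ (fderiv ℝ (nfun ρ0 h ε)) x ∧
      ‖fderiv ℝ (fderiv ℝ (nfun ρ0 h ε)) x‖ ≤ 2/ε^3 + (2/ε)^2 := by
  obtain ⟨c, hc, hcd⟩ := hasDerivAt_ρD hε hεh hx1 hx2
  set θ := ρfun ρ0 h ε (x 2) with hθ
  set d := ρD h ε (x 2) with hd
  have hFρ : HasDerivAt (fun z => Fv (ρfun ρ0 h ε z)) (d • mk3 (-Real.cos θ) 0 (-Real.sin θ))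
      (x 2) := by
    have := (hasDerivAt_Fv θ).scomp (x 2) (hasDerivAt_ρfun ρ0 hε hεh (x 2))
    simpa [Function.comp_def] using this
  have hline : HasDerivAt (fun z => ρD h ε z • Fv (ρfun ρ0 h ε z))
      (d • (d • mk3 (-Real.cos θ) 0 (-Real.sin θ)) + c • Fv θ) (x 2) :=
    hcd.smul hFρ
  have hW : HasFDerivAt (Wmap ρ0 h ε)
      (pr2.smulRight (d • (d • mk3 (-Real.cos θ) 0 (-Real.sin θ)) + c • Fv θ)) x := by
    have h2 := (hline.hasFDerivAt).comp x pr2.hasFDerivAt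
    have h3 : ((1 : ℝ →L[ℝ] ℝ).smulRight
          (d • (d • mk3 (-Real.cos θ) 0 (-Real.sin θ)) + c • Fv θ)).comp pr2
        = pr2.smulRight (d • (d • mk3 (-Real.cos θ) 0 (-Real.sin θ)) + c • Fv θ) := by
      ext w
      simp
    rw [← ContinuousLinearMap.smulRight_one_eq_toSpanSingleton, h3] at h2
    exact h2
  set L := (ContinuousLinearMap.smulRightL ℝ E3 E3 pr2) with hL
  have hD2 : HasFDerivAt (fderiv ℝ (nfun ρ0 h ε))
      (L.comp (pr2.smulRight (d • (d • mk3 (-Real.cos θ) 0 (-Real.sin θ)) + c • Fv θ))) x := by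
    rw [fderiv_nfun_eq ρ0 hε hεh]
    exact (L.hasFDerivAt).comp x hW
  refine ⟨hD2.differentiableAt, ?_⟩
  rw [hD2.fderiv]
  have hnorm1 : ‖L‖ = 1 := by rw [hL, ContinuousLinearMap.norm_smulRightL, norm_pr2]
  have hmkn : ‖mk3 (-Real.cos θ) 0 (-Real.sin θ)‖ = 1 := by
    rw [norm_mk3]
    have : (-Real.cos θ)^2 + 0^2 + (-Real.sin θ)^2 = 1 := by
      have := Real.sin_sq_add_cos_sq θ; ring_nf; ring_nf at this; linarith
    rw [this, Real.sqrt_one]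
  have habs : ‖d • (d • mk3 (-Real.cos θ) 0 (-Real.sin θ)) + c • Fv θ‖ ≤ (2/ε)^2 + 2/ε^3 := by
    have hdb : |d| ≤ 2/ε := abs_ρD_le hε hx3
    calc ‖d • (d • mk3 (-Real.cos θ) 0 (-Real.sin θ)) + c • Fv θ‖
        ≤ ‖d • (d • mk3 (-Real.cos θ) 0 (-Real.sin θ))‖ + ‖c • Fv θ‖ := norm_add_le _ _
      _ = |d| * (|d| * 1) + |c| * 1 := by
          simp [norm_smul, hmkn, norm_Fv, Real.norm_eq_abs]
      _ ≤ (2/ε) * ((2/ε) * 1) + (2/ε^3) * 1 := by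
          apply add_le_add
          · apply mul_le_mul hdb _ (by positivity) (by positivity)
            apply mul_le_mul hdb le_rfl zero_le_one (by positivity)
          · exact mul_le_mul hc le_rfl zero_le_one (by positivity)
      _ = (2/ε)^2 + 2/ε^3 := by ring
  calc ‖L.comp (pr2.smulRight (d • (d • mk3 (-Real.cos θ) 0 (-Real.sin θ)) + c • Fv θ))‖
      ≤ ‖L‖ * ‖pr2.smulRight (d • (d • mk3 (-Real.cos θ) 0 (-Real.sin θ)) + c • Fv θ)‖ :=
        ContinuousLinearMap.opNorm_comp_le _ _
    _ = ‖d • (d • mk3 (-Real.cos θ) 0 (-Real.sin θ)) + c • Fv θ‖ := by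
        rw [hnorm1, one_mul, ContinuousLinearMap.norm_smulRight_apply, norm_pr2, one_mul]
    _ ≤ (2/ε)^2 + 2/ε^3 := habs
    _ = 2/ε^3 + (2/ε)^2 := by ring

/-! ### Measure-theoretic lemmas on the box -/

def S2set (l h : ℝ) : Set (Fin 2 → ℝ) := {y | y 0 ∈ Ioo 0 l ∧ y 1 ∈ Ioo (-h) h}
def S1set (h : ℝ) : Set (Fin 1 → ℝ) := {y | y 0 ∈ Ioo (-h) h}
def S3set (l h : ℝ) : Set (Fin 3 → ℝ) := {y | y 0 ∈ Ioo 0 l ∧ y 1 ∈ Ioo 0 l ∧ y 2 ∈ Ioo (-h) h}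

lemma S3set_eq_pi (l h : ℝ) : S3set l h = univ.pi ![Ioo 0 l, Ioo 0 l, Ioo (-h) h] := by
  ext y
  constructor
  · rintro ⟨h0, h1, h2⟩ i _
    fin_cases i <;> simpa
  · intro hy
    exact ⟨by simpa using hy 0 trivial, by simpa using hy 1 trivial, by simpa using hy 2 trivial⟩

lemma measurableEquiv_symm_preimage_box (l h : ℝ) :
    (MeasurableEquiv.toLp 2 (Fin 3 → ℝ)).symm.symm ⁻¹' box l h = S3set l h := by
  ext y
  simp only [mem_preimage, box, S3set, mem_setOf_eq, MeasurableEquiv.symm_symm,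
    MeasurableEquiv.toLp_apply, PiLp.toLp_apply]

lemma isOpen_box (l h : ℝ) : IsOpen (box l h) := by
  have h0 : box l h = (EuclideanSpace.proj (0 : Fin 3)) ⁻¹' (Ioo 0 l) ∩
      ((EuclideanSpace.proj (1 : Fin 3)) ⁻¹' (Ioo 0 l) ∩
       (EuclideanSpace.proj (2 : Fin 3)) ⁻¹' (Ioo (-h) h)) := rfl
  rw [h0]
  exact ((isOpen_Ioo.preimage (EuclideanSpace.proj (0:Fin 3)).continuous).inter
    ((isOpen_Ioo.preimage (EuclideanSpace.proj (1:Fin 3)).continuous).inter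
      (isOpen_Ioo.preimage (EuclideanSpace.proj (2:Fin 3)).continuous)))

lemma volume_box (l h : ℝ) :
    volume (box l h) = ENNReal.ofReal l * ENNReal.ofReal l * ENNReal.ofReal (2*h) := by
  have hψ := (EuclideanSpace.volume_preserving_symm_measurableEquiv_toLp (Fin 3)).symm
  rw [← hψ.measure_preimage ((isOpen_box l h).measurableSet.nullMeasurableSet),
    measurableEquiv_symm_preimage_box, S3set_eq_pi, volume_pi, Measure.pi_pi]
  simp [Fin.prod_univ_three, Real.volume_Ioo]
  rw [← two_mul, ENNReal.ofReal_mul zero_le_two]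
  norm_num

instance finiteRestrictIoo (a b : ℝ) : IsFiniteMeasure (volume.restrict (Ioo a b)) :=
  ⟨by rw [Measure.restrict_apply_univ]
      exact (Real.volume_Ioo (a:=a) (b:=b)) ▸ ENNReal.ofReal_lt_top⟩

lemma measurableSet_S1 (h : ℝ) : MeasurableSet (S1set h) := by
  have : S1set h = (fun y : Fin 1 → ℝ => y 0) ⁻¹' (Ioo (-h) h) := rfl
  rw [this]
  exact (measurable_pi_apply 0) measurableSet_Ioo

lemma measurableSet_S2 (l h : ℝ) : MeasurableSet (S2set l h) := by
  have : S2set l h = (fun y : Fin 2 → ℝ => y 0) ⁻¹' (Ioo 0 l) ∩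
      (fun y : Fin 2 → ℝ => y 1) ⁻¹' (Ioo (-h) h) := rfl
  rw [this]
  exact ((measurable_pi_apply 0) measurableSet_Ioo).inter ((measurable_pi_apply 1) measurableSet_Ioo)

lemma setIntegral_S1 (h : ℝ) (f : ℝ → ℝ) :
    ∫ y in S1set h, f (y 0) = ∫ z in Ioo (-h) h, f z := by
  have hφ := (volume_preserving_funUnique (Fin 1) ℝ).symm
  have hemb : MeasurableEmbedding (⇑(MeasurableEquiv.funUnique (Fin 1) ℝ).symm) :=
    (MeasurableEquiv.funUnique (Fin 1) ℝ).symm.measurableEmbedding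
  have key := hφ.setIntegral_preimage_emb hemb (fun y => f (y 0)) (S1set h)
  refine key.symm.trans ?_
  have hpre : (MeasurableEquiv.funUnique (Fin 1) ℝ).symm ⁻¹' (S1set h) = Ioo (-h) h := by
    ext z
    simp [S1set, MeasurableEquiv.funUnique, Equiv.funUnique]
  rw [hpre]
  rfl

lemma setIntegral_S2 (l h : ℝ) (f : ℝ → ℝ) :
    ∫ y in S2set l h, f (y 1) = l.toNNReal * ∫ z in Ioo (-h) h, f z := by
  have hφ := (volume_preserving_piFinSuccAbove (fun _ : Fin 2 => ℝ) 0).symm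
  have hemb : MeasurableEmbedding (⇑(MeasurableEquiv.piFinSuccAbove (fun _ : Fin 2 => ℝ) 0).symm) :=
    (MeasurableEquiv.piFinSuccAbove (fun _ : Fin 2 => ℝ) 0).symm.measurableEmbedding
  have key := hφ.setIntegral_preimage_emb hemb (fun y => f (y 1)) (S2set l h)
  rw [← key]
  have hpre : (MeasurableEquiv.piFinSuccAbove (fun _ : Fin 2 => ℝ) 0).symm ⁻¹' (S2set l h)
      = Ioo 0 l ×ˢ S1set h := by
    ext p
    simp only [mem_preimage, S2set, S1set, mem_setOf_eq, mem_prod, MeasurableEquiv.piFinSuccAbove,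
      MeasurableEquiv.coe_mk, MeasurableEquiv.piFinSuccAbove_symm_apply]
    constructor
    · rintro ⟨h0, h1⟩
      refine ⟨by simpa using h0, by simpa using h1⟩
    · rintro ⟨h0, h1⟩
      exact ⟨by simpa using h0, by simpa using h1⟩
  rw [hpre]
  have hfun : ∀ p : ℝ × (Fin 1 → ℝ),
      f (((MeasurableEquiv.piFinSuccAbove (fun _ : Fin 2 => ℝ) 0).symm p) 1) = f (p.2 0) := by
    intro p
    simp [MeasurableEquiv.piFinSuccAbove]
  calc ∫ p in Ioo 0 l ×ˢ S1set h,
        f (((MeasurableEquiv.piFinSuccAbove (fun _ : Fin 2 => ℝ) 0).symm p) 1)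
      = ∫ p in Ioo 0 l ×ˢ S1set h, f (p.2 0) := by
        apply setIntegral_congr_fun ((measurableSet_Ioo).prod (measurableSet_S1 h))
        intro p _
        exact hfun p
    _ = ∫ p, f (p.2 0) ∂((volume.restrict (Ioo 0 l)).prod (volume.restrict (S1set h))) := by
        rw [Measure.volume_eq_prod, Measure.prod_restrict]
    _ = ((volume.restrict (Ioo 0 l)) univ).toReal • ∫ y, f (y 0) ∂(volume.restrict (S1set h)) :=
        integral_fun_snd (μ := volume.restrict (Ioo 0 l)) (ν := volume.restrict (S1set h))
          (fun y => f (y 0))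
    _ = l.toNNReal * ∫ z in Ioo (-h) h, f z := by
        rw [setIntegral_S1, Measure.restrict_apply_univ, Real.volume_Ioo, sub_zero, smul_eq_mul,
          ENNReal.toReal_ofReal']
        congr 1

lemma setIntegral_S3 (l h : ℝ) (f : ℝ → ℝ) :
    ∫ y in S3set l h, f (y 2) = l.toNNReal * (l.toNNReal * ∫ z in Ioo (-h) h, f z) := by
  have hφ := (volume_preserving_piFinSuccAbove (fun _ : Fin 3 => ℝ) 0).symm
  have hemb : MeasurableEmbedding (⇑(MeasurableEquiv.piFinSuccAbove (fun _ : Fin 3 => ℝ) 0).symm) :=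
    (MeasurableEquiv.piFinSuccAbove (fun _ : Fin 3 => ℝ) 0).symm.measurableEmbedding
  have key := hφ.setIntegral_preimage_emb hemb (fun y => f (y 2)) (S3set l h)
  rw [← key]
  have hpre : (MeasurableEquiv.piFinSuccAbove (fun _ : Fin 3 => ℝ) 0).symm ⁻¹' (S3set l h)
      = Ioo 0 l ×ˢ S2set l h := by
    ext p
    simp only [mem_preimage, S3set, S2set, mem_setOf_eq, mem_prod, MeasurableEquiv.piFinSuccAbove,
      MeasurableEquiv.coe_mk, MeasurableEquiv.piFinSuccAbove_symm_apply]
    constructor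
    · rintro ⟨h0, h1, h2⟩
      refine ⟨by simpa using h0, by simpa using h1,
        by exact h2⟩
    · rintro ⟨h0, h1, h2⟩
      exact ⟨by simpa using h0, by simpa using h1,
        by exact h2⟩
  rw [hpre]
  have hfun : ∀ p : ℝ × (Fin 2 → ℝ),
      f (((MeasurableEquiv.piFinSuccAbove (fun _ : Fin 3 => ℝ) 0).symm p) 2) = f (p.2 1) := by
    intro p
    have h2 : ((MeasurableEquiv.piFinSuccAbove (fun _ : Fin 3 => ℝ) 0).symm p) 2 = p.2 1 := rfl
    rw [h2]
  calc ∫ p in Ioo 0 l ×ˢ S2set l h,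
        f (((MeasurableEquiv.piFinSuccAbove (fun _ : Fin 3 => ℝ) 0).symm p) 2)
      = ∫ p in Ioo 0 l ×ˢ S2set l h, f (p.2 1) := by
        apply setIntegral_congr_fun ((measurableSet_Ioo).prod (measurableSet_S2 l h))
        intro p _
        exact hfun p
    _ = ∫ p, f (p.2 1) ∂((volume.restrict (Ioo 0 l)).prod (volume.restrict (S2set l h))) := by
        rw [Measure.volume_eq_prod, Measure.prod_restrict]
    _ = ((volume.restrict (Ioo 0 l)) univ).toReal •
          ∫ y, f (y 1) ∂(volume.restrict (S2set l h)) :=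
        integral_fun_snd (μ := volume.restrict (Ioo 0 l)) (ν := volume.restrict (S2set l h))
          (fun y => f (y 1))
    _ = l.toNNReal * (l.toNNReal * ∫ z in Ioo (-h) h, f z) := by
        rw [setIntegral_S2, Measure.restrict_apply_univ, Real.volume_Ioo, sub_zero, smul_eq_mul,
          ENNReal.toReal_ofReal']
        congr 1

lemma setIntegral_box (l h : ℝ) (f : ℝ → ℝ) :
    ∫ x in box l h, f (x 2) = l.toNNReal * (l.toNNReal * ∫ z in Ioo (-h) h, f z) := by
  have hψ := (EuclideanSpace.volume_preserving_symm_measurableEquiv_toLp (Fin 3)).symm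
  have hemb : MeasurableEmbedding (⇑(MeasurableEquiv.toLp 2 (Fin 3 → ℝ)).symm.symm) :=
    (MeasurableEquiv.toLp 2 (Fin 3 → ℝ)).symm.symm.measurableEmbedding
  have key := hψ.setIntegral_preimage_emb hemb (fun x : E3 => f (x 2)) (box l h)
  rw [← key, measurableEquiv_symm_preimage_box, ← setIntegral_S3 l h f]
  apply setIntegral_congr_fun
  · rw [S3set_eq_pi]
    exact MeasurableSet.univ_pi (by intro i; fin_cases i <;> exact measurableSet_Ioo)
  · intro y _
    congr 1

lemma null_plane (c : ℝ) : volume {x : E3 | x 2 = c} = 0 := by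
  have hψ := (EuclideanSpace.volume_preserving_symm_measurableEquiv_toLp (Fin 3)).symm
  have hpre : (MeasurableEquiv.toLp 2 (Fin 3 → ℝ)).symm.symm ⁻¹' {x : E3 | x 2 = c}
      = {y : Fin 3 → ℝ | y 2 = c} := by
    ext y
    simp [MeasurableEquiv.symm_symm, MeasurableEquiv.toLp_apply, PiLp.toLp_apply]
  have hm : MeasurableSet {x : E3 | x 2 = c} := by
    have : {x : E3 | x 2 = c} = (EuclideanSpace.proj (2 : Fin 3)) ⁻¹' {c} := rfl
    rw [this]
    exact (EuclideanSpace.proj (2:Fin 3)).continuous.measurable (measurableSet_singleton c)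
  rw [← hψ.measure_preimage hm.nullMeasurableSet, hpre, volume_pi]
  exact Measure.pi_hyperplane (fun _ : Fin 3 => (volume : Measure ℝ)) 2 c

lemma integral_ρD_sq {h ε : ℝ} (hε : 0 < ε) (hεh : ε^2 < h) :
    ∫ z in Ioo (-h) h, (ρD h ε z)^2 = 8/3 := by
  have hcont : Continuous (fun z => (ρD h ε z)^2) := (continuous_ρD h ε).pow 2
  have hle1 : -h ≤ -h + ε^2 := by nlinarith
  have hle2 : -h + ε^2 ≤ h - ε^2 := by nlinarith
  have hle3 : h - ε^2 ≤ h := by nlinarith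
  have hIoc : ∫ z in Ioo (-h) h, (ρD h ε z)^2 = ∫ z in (-h)..h, (ρD h ε z)^2 := by
    rw [intervalIntegral.integral_of_le (by linarith), integral_Ioc_eq_integral_Ioo]
  rw [hIoc]
  have hsplit1 : ∫ z in (-h)..(-h+ε^2), (ρD h ε z)^2 = 4/3 := by
    have heq : EqOn (fun z => (ρD h ε z)^2) (fun z => (4/ε^6) * (z - (ε^2 - h))^2)
        (uIcc (-h) (-h+ε^2)) := by
      intro z hz
      rw [uIcc_of_le hle1] at hz
      have h1 : max (z-h+ε^2) 0 = 0 := max_eq_right (by nlinarith [hz.2])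
      have h2 : min (z+h-ε^2) 0 = z+h-ε^2 := min_eq_left (by nlinarith [hz.2])
      simp only [ρD, h1, h2, zero_add]
      field_simp
      ring
    rw [intervalIntegral.integral_congr heq, intervalIntegral.integral_const_mul,
      intervalIntegral.integral_comp_sub_right (fun u => u^2) (ε^2-h), integral_pow]
    have e1 : -h - (ε^2 - h) = -ε^2 := by ring
    have e2 : -h + ε^2 - (ε^2 - h) = 0 := by ring
    rw [e1, e2]
    have : (0:ℝ)^(2+1) - (-ε^2)^(2+1) = ε^6 := by ring
    rw [this]
    field_simp
    ring
  have hsplit3 : ∫ z in (h-ε^2)..h, (ρD h ε z)^2 = 4/3 := by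
    have heq : EqOn (fun z => (ρD h ε z)^2) (fun z => (4/ε^6) * (z - (h - ε^2))^2)
        (uIcc (h-ε^2) h) := by
      intro z hz
      rw [uIcc_of_le hle3] at hz
      have h1 : max (z-h+ε^2) 0 = z-h+ε^2 := max_eq_left (by nlinarith [hz.1])
      have h2 : min (z+h-ε^2) 0 = 0 := min_eq_right (by nlinarith [hz.1])
      simp only [ρD, h1, h2, add_zero]
      field_simp
      ring
    rw [intervalIntegral.integral_congr heq, intervalIntegral.integral_const_mul,
      intervalIntegral.integral_comp_sub_right (fun u => u^2) (h-ε^2), integral_pow]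
    have e1 : h - ε^2 - (h - ε^2) = 0 := by ring
    have e2 : h - (h - ε^2) = ε^2 := by ring
    rw [e1, e2]
    have : (ε^2:ℝ)^(2+1) - 0^(2+1) = ε^6 := by ring
    rw [this]
    field_simp
    ring
  have hsplit2 : ∫ z in (-h+ε^2)..(h-ε^2), (ρD h ε z)^2 = 0 := by
    have heq : EqOn (fun z => (ρD h ε z)^2) (fun _ => (0:ℝ)) (uIcc (-h+ε^2) (h-ε^2)) := by
      intro z hz
      rw [uIcc_of_le hle2] at hz
      have h1 : max (z-h+ε^2) 0 = 0 := max_eq_right (by nlinarith [hz.2])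
      have h2 : min (z+h-ε^2) 0 = 0 := min_eq_right (by nlinarith [hz.1])
      simp [ρD, h1, h2]
    rw [intervalIntegral.integral_congr heq]
    simp
  have hint : ∀ a b : ℝ, IntervalIntegrable (fun z => (ρD h ε z)^2) volume a b :=
    fun a b => hcont.intervalIntegrable a b
  rw [← intervalIntegral.integral_add_adjacent_intervals (hint (-h) (-h+ε^2)) (hint (-h+ε^2) h),
    ← intervalIntegral.integral_add_adjacent_intervals (hint (-h+ε^2) (h-ε^2)) (hint (h-ε^2) h),
    hsplit1, hsplit2, hsplit3]
  norm_num

/-! ### Boundary values -/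

lemma ρfun_top {h ε : ℝ} (ρ0 : ℝ) (hε : 0 < ε) : ρfun ρ0 h ε h = ρ0 := by
  rw [ρfun, if_pos (by nlinarith)]
  have : ε^3 ≠ 0 := by positivity
  field_simp
  ring

lemma ρfun_bot {h ε : ℝ} (ρ0 : ℝ) (hε : 0 < ε) (hεh : ε^2 < h) : ρfun ρ0 h ε (-h) = ρ0 := by
  rw [ρfun, if_neg (by intro hc; nlinarith), if_pos (by nlinarith)]
  have : ε^3 ≠ 0 := by positivity
  field_simp
  ring

lemma ρD_top {h ε : ℝ} (hε : 0 < ε) (hεh : ε^2 < h) : ρD h ε h = -2/ε := by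
  rw [ρD, max_eq_left (by nlinarith), min_eq_right (by nlinarith)]
  have : ε ≠ 0 := ne_of_gt hε
  field_simp
  ring

lemma ρD_bot {h ε : ℝ} (hε : 0 < ε) (hεh : ε^2 < h) : ρD h ε (-h) = 2/ε := by
  rw [ρD, max_eq_right (by nlinarith), min_eq_left (by nlinarith)]
  have : ε ≠ 0 := ne_of_gt hε
  field_simp
  ring

lemma surfTerm_formula {h ε : ℝ} (ρ0 : ℝ) (hε : 0 < ε) (hεh : ε^2 < h) (x v : E3) :
    surfTerm (nfun ρ0 h ε) x v =
      Real.sin (ρfun ρ0 h ε (x 2)) * ρD h ε (x 2) * ⟪Fv (ρfun ρ0 h ε (x 2)), v⟫ := by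
  rw [surfTerm, fderiv_nfun ρ0 hε hεh x, ContinuousLinearMap.smulRight_apply]
  have hx2 : pr2 (nfun ρ0 h ε x) = Real.sin (ρfun ρ0 h ε (x 2)) := by
    exact (mk3_apply (Real.cos (ρfun ρ0 h ε (x 2))) 0 (Real.sin (ρfun ρ0 h ε (x 2)))).2.2
  rw [hx2, Wmap, real_inner_smul_left, real_inner_smul_left]
  ring

/-! ### The energy value -/

lemma energy_value (K K13 l h ρ0 : ℝ) (hl : 0 < l) {ε : ℝ} (hε : 0 < ε) (hεh : ε^2 < h) :
    energyEbox K K13 l h (nfun ρ0 h ε)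
      = 4 * l^2 * (K/3 - K13 * Real.sin (2*ρ0) / (2*ε)) := by
  have hεne : ε ≠ 0 := ne_of_gt hε
  have hvol : ∫ x in box l h, (K/2) * ‖fderiv ℝ (nfun ρ0 h ε) x‖^2
      = l * (l * (K/2 * (8/3))) := by
    have hfe : ∀ x : E3, (K/2) * ‖fderiv ℝ (nfun ρ0 h ε) x‖^2 = (K/2) * (ρD h ε (x 2))^2 := by
      intro x
      rw [norm_fderiv_nfun ρ0 hε hεh x, sq_abs]
    calc ∫ x in box l h, (K/2) * ‖fderiv ℝ (nfun ρ0 h ε) x‖^2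
        = ∫ x in box l h, (K/2) * (ρD h ε (x 2))^2 := by simp only [hfe]
      _ = (l.toNNReal : ℝ) * ((l.toNNReal : ℝ) * ∫ z in Ioo (-h) h, (K/2) * (ρD h ε z)^2) :=
          setIntegral_box l h (fun z => (K/2) * (ρD h ε z)^2)
      _ = l * (l * (K/2 * (8/3))) := by
          rw [integral_const_mul, integral_ρD_sq hε hεh, Real.coe_toNNReal _ hl.le]
  have area : (volume (Ioo (0:ℝ) l ×ˢ Ioo (0:ℝ) l)).toReal = l * l := by
    rw [Measure.volume_eq_prod, Measure.prod_prod, Real.volume_Ioo, sub_zero, ENNReal.toReal_mul,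
      ENNReal.toReal_ofReal hl.le]
  have htop : ∫ q in (Ioo (0:ℝ) l ×ˢ Ioo (0:ℝ) l),
      surfTerm (nfun ρ0 h ε) (mk3 q.1 q.2 h) (mk3 0 0 1)
        = (l*l) * (Real.sin ρ0 * (-2/ε) * Real.cos ρ0) := by
    have hco : ∀ q : ℝ × ℝ, surfTerm (nfun ρ0 h ε) (mk3 q.1 q.2 h) (mk3 0 0 1)
        = Real.sin ρ0 * (-2/ε) * Real.cos ρ0 := by
      intro q
      rw [surfTerm_formula ρ0 hε hεh, mk3_two, ρfun_top ρ0 hε, ρD_top hε hεh, Fv, inner_mk3]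
      ring
    simp only [hco]
    rw [setIntegral_const, smul_eq_mul, measureReal_def, area]
  have hbot : ∫ q in (Ioo (0:ℝ) l ×ˢ Ioo (0:ℝ) l),
      surfTerm (nfun ρ0 h ε) (mk3 q.1 q.2 (-h)) (mk3 0 0 (-1))
        = (l*l) * (Real.sin ρ0 * (-2/ε) * Real.cos ρ0) := by
    have hco : ∀ q : ℝ × ℝ, surfTerm (nfun ρ0 h ε) (mk3 q.1 q.2 (-h)) (mk3 0 0 (-1))
        = Real.sin ρ0 * (-2/ε) * Real.cos ρ0 := by
      intro q
      rw [surfTerm_formula ρ0 hε hεh, mk3_two, ρfun_bot ρ0 hε hεh, ρD_bot hε hεh, Fv, inner_mk3]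
      ring
    simp only [hco]
    rw [setIntegral_const, smul_eq_mul, measureReal_def, area]
  have hx4 : ∀ q : ℝ × ℝ, surfTerm (nfun ρ0 h ε) (mk3 0 q.1 q.2) (mk3 (-1) 0 0)
      = - surfTerm (nfun ρ0 h ε) (mk3 l q.1 q.2) (mk3 1 0 0) := by
    intro q
    rw [surfTerm_formula ρ0 hε hεh, surfTerm_formula ρ0 hε hεh, mk3_two, mk3_two, Fv,
      inner_mk3, inner_mk3]
    ring
  have hy5 : ∀ q : ℝ × ℝ, surfTerm (nfun ρ0 h ε) (mk3 q.1 l q.2) (mk3 0 1 0) = 0 := by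
    intro q
    rw [surfTerm_formula ρ0 hε hεh, mk3_two, Fv, inner_mk3]
    ring
  have hy6 : ∀ q : ℝ × ℝ, surfTerm (nfun ρ0 h ε) (mk3 q.1 0 q.2) (mk3 0 (-1) 0) = 0 := by
    intro q
    rw [surfTerm_formula ρ0 hε hεh, mk3_two, Fv, inner_mk3]
    ring
  rw [energyEbox, hvol, htop, hbot]
  simp only [hx4, hy5, hy6, integral_neg, integral_zero]
  rw [Real.sin_two_mul]
  field_simp
  ring

lemma norm_nfun (ρ0 h ε : ℝ) (x : E3) : ‖nfun ρ0 h ε x‖ = 1 := by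
  rw [nfun, norm_mk3]
  have : Real.cos (ρfun ρ0 h ε (x 2))^2 + 0^2 + Real.sin (ρfun ρ0 h ε (x 2))^2 = 1 := by
    have := Real.sin_sq_add_cos_sq (ρfun ρ0 h ε (x 2))
    ring_nf
    ring_nf at this
    linarith
  rw [this, Real.sqrt_one]

lemma memA_nfun (l h ρ0 : ℝ) {ε : ℝ} (hε : 0 < ε) (hεh : ε^2 < h) :
    MemA (box l h) (nfun ρ0 h ε) := by
  haveI : IsFiniteMeasure (volume.restrict (box l h)) := by
    refine ⟨?_⟩
    rw [Measure.restrict_apply_univ, volume_box]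
    exact ENNReal.mul_lt_top (ENNReal.mul_lt_top ENNReal.ofReal_lt_top ENNReal.ofReal_lt_top)
      ENNReal.ofReal_lt_top
  have hmeas := (isOpen_box l h).measurableSet
  have hae : ∀ᵐ x ∂(volume.restrict (box l h)),
      (x 2 ≠ h - ε^2 ∧ x 2 ≠ -h + ε^2) ∧ x ∈ box l h := by
    have h0 : ∀ᵐ x : E3, x 2 ≠ h - ε^2 ∧ x 2 ≠ -h + ε^2 := by
      rw [ae_iff]
      have hsub : {x : E3 | ¬(x 2 ≠ h - ε^2 ∧ x 2 ≠ -h + ε^2)}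
          ⊆ {x : E3 | x 2 = h - ε^2} ∪ {x : E3 | x 2 = -h + ε^2} := by
        intro x hx
        simp only [mem_setOf_eq, not_and_or, not_not, ne_eq] at hx
        rcases hx with hx | hx
        · exact Or.inl (by simpa using hx)
        · exact Or.inr (by simpa using hx)
      exact measure_mono_null hsub (measure_union_null (null_plane _) (null_plane _))
    exact (ae_restrict_of_ae h0).and (ae_restrict_mem hmeas)
  have hdiff : ∀ x : E3, DifferentiableAt ℝ (nfun ρ0 h ε) x :=
    fun x => (hasFDerivAt_nfun ρ0 hε hεh x).differentiableAt
  have hcont : Continuous (nfun ρ0 h ε) := by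
    rw [continuous_iff_continuousAt]
    exact fun x => (hdiff x).continuousAt
  refine ⟨ae_of_all _ (fun x => norm_nfun ρ0 h ε x), ae_of_all _ (fun x => norm_nfun ρ0 h ε x),
    ae_of_all _ hdiff, ?_, ?_, ?_, ?_⟩
  · filter_upwards [hae] with x hx
    exact (second_deriv ρ0 hε hεh hx.1.1 hx.1.2 ⟨hx.2.2.2.1.le, hx.2.2.2.2.le⟩).1
  · exact ⟨hcont.aestronglyMeasurable.restrict,
      HasFiniteIntegral.of_bounded (C := 1) (ae_of_all _ fun x => le_of_eq (norm_nfun ρ0 h ε x))⟩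
  · have hfeq : (fun x : E3 => ‖fderiv ℝ (nfun ρ0 h ε) x‖^2) = fun x => (ρD h ε (x 2))^2 :=
      funext fun x => by rw [norm_fderiv_nfun ρ0 hε hεh x, sq_abs]
    rw [IntegrableOn, hfeq]
    refine ⟨Continuous.aestronglyMeasurable ?_ |>.restrict,
      HasFiniteIntegral.of_bounded (C := (2/ε)^2) ?_⟩
    · exact ((continuous_ρD h ε).comp (EuclideanSpace.proj (2 : Fin 3)).continuous).pow 2
    · filter_upwards [ae_restrict_mem hmeas] with x hx
      have hb := abs_ρD_le hε (z := x 2) ⟨hx.2.2.1.le, hx.2.2.2.le⟩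
      have hn : ‖(ρD h ε (x 2))^2‖ = |ρD h ε (x 2)|^2 := by
        rw [Real.norm_eq_abs, abs_pow]
      rw [hn]
      exact pow_le_pow_left₀ (abs_nonneg _) hb 2
  · refine ⟨((measurable_fderiv ℝ (fderiv ℝ (nfun ρ0 h ε))).norm).aestronglyMeasurable.restrict,
      HasFiniteIntegral.of_bounded (C := 2/ε^3 + (2/ε)^2) ?_⟩
    filter_upwards [hae] with x hx
    have h2 := (second_deriv ρ0 hε hεh hx.1.1 hx.1.2 ⟨hx.2.2.2.1.le, hx.2.2.2.2.le⟩).2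
    rw [Real.norm_eq_abs]
    exact (abs_of_nonneg (ContinuousLinearMap.opNorm_nonneg _)).trans_le h2

/-! ### Convergence helper -/

lemma eventually_energy (K K13 l h ρ0 : ℝ) (hl : 0 < l) (hh : 0 < h) :
    ∀ᶠ ε in 𝓝[>] (0:ℝ), 0 < ε ∧ ε^2 < h ∧
      energyEbox K K13 l h (nfun ρ0 h ε)
        = 4 * l^2 * (K/3 - K13 * Real.sin (2*ρ0) / (2*ε)) := by
  filter_upwards [Ioo_mem_nhdsGT_of_mem (b := (0:ℝ)) ⟨le_rfl, lt_min one_pos hh⟩] with ε hε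
  have hε0 : 0 < ε := hε.1
  have hε1 : ε < 1 := lt_of_lt_of_le hε.2 (min_le_left _ _)
  have hεh' : ε < h := lt_of_lt_of_le hε.2 (min_le_right _ _)
  have hεh : ε^2 < h := by nlinarith
  exact ⟨hε0, hεh, energy_value K K13 l h ρ0 hl hε0 hεh⟩

lemma tendsto_energy (K K13 l h ρ0 : ℝ) (hl : 0 < l) (hh : 0 < h)
    (hpos : 0 < K13 * Real.sin (2 * ρ0)) :
    Tendsto (fun ε : ℝ => energyEbox K K13 l h (nfun ρ0 h ε)) (𝓝[>] 0) atBot := by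
  have hC : 0 < 2 * l^2 * (K13 * Real.sin (2*ρ0)) := by positivity
  have h1 : Tendsto (fun ε : ℝ => (2 * l^2 * (K13 * Real.sin (2*ρ0))) * ε⁻¹)
      (𝓝[>] (0:ℝ)) atTop :=
    Tendsto.const_mul_atTop hC tendsto_inv_nhdsGT_zero
  have h2 : Tendsto (fun ε : ℝ =>
      4*l^2*(K/3) + -((2 * l^2 * (K13 * Real.sin (2*ρ0))) * ε⁻¹)) (𝓝[>] (0:ℝ)) atBot :=
    tendsto_atBot_add_const_left _ _ (tendsto_neg_atTop_atBot.comp h1)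
  have heq : (fun ε : ℝ => 4 * l^2 * (K/3 - K13 * Real.sin (2*ρ0) / (2*ε)))
      = fun ε : ℝ => 4*l^2*(K/3) + -((2 * l^2 * (K13 * Real.sin (2*ρ0))) * ε⁻¹) := by
    funext ε
    rw [div_mul_eq_div_div]
    ring
  apply Tendsto.congr' _ (heq ▸ h2)
  filter_upwards [eventually_energy K K13 l h ρ0 hl hh] with ε hε
  exact hε.2.2.symm

/-- For the box `Ω = (0,l)²×(−h,h)` and `0 < ε` with `ε² < h`:
`n_ε ∈ W^{1,2}(Ω;S²) ∩ W^{2,1}(Ω;S²)` and `E[n_ε] = 4l²(K/3 − K₁₃ sin(2ρ₀)/(2ε))`.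
If `K₁₃ sin(2ρ₀) > 0` then `E[n_ε] → −∞` as `ε → 0⁺`, and `E` is unbounded from below
on `W^{1,2}(Ω;S²) ∩ W^{2,1}(Ω;S²)`. -/
theorem stmt3 (K K13 l h ρ0 : ℝ) (hK : 0 < K) (hl : 0 < l) (hh : 0 < h) :
    (∀ ε : ℝ, 0 < ε → ε ^ 2 < h →
      MemA (box l h) (nfun ρ0 h ε) ∧
      energyEbox K K13 l h (nfun ρ0 h ε) =
        4 * l ^ 2 * (K / 3 - K13 * Real.sin (2 * ρ0) / (2 * ε))) ∧
    (0 < K13 * Real.sin (2 * ρ0) →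
      Tendsto (fun ε : ℝ => energyEbox K K13 l h (nfun ρ0 h ε)) (𝓝[>] 0) atBot) ∧
    (0 < K13 * Real.sin (2 * ρ0) →
      ∀ M : ℝ, ∃ n : E3 → E3, MemA (box l h) n ∧ energyEbox K K13 l h n < M) := by
  refine ⟨?_, ?_, ?_⟩
  · intro ε hε hεh
    exact ⟨memA_nfun l h ρ0 hε hεh, energy_value K K13 l h ρ0 hl hε hεh⟩
  · intro hpos
    exact tendsto_energy K K13 l h ρ0 hl hh hpos
  · intro hpos M
    have h1 := (tendsto_energy K K13 l h ρ0 hl hh hpos).eventually (eventually_lt_atBot M)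
    have h2 := eventually_energy K K13 l h ρ0 hl hh
    obtain ⟨ε, hlt, hε0, hεh, -⟩ := (h1.and h2).exists
    exact ⟨nfun ρ0 h ε, memA_nfun l h ρ0 hε0 hεh, hlt⟩
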